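/- There exists a constant C > 0 such that for every integer n ≥ 1 and every continuously differentiable function u : [0,1] → ℝ with u(0) = u(1) = 0, the (almost everywhere defined) derivative of the piecewise-linear function 𝔍_n u satisfies ∫₀¹ ((𝔍_n u)′(x))² dx ≤ C ∫₀¹ (u′(x))² dx. -/

import Mathlib

/-!
On the cell `[k h, (k+1) h]`, `h = 1/(n+1)`, the function `𝔍_n u` is `c_k 𝔢_k + c_{k+1} 𝔢_{k+1}`
with `c_i = ∫ u 𝔢_i` for `1 ≤ i ≤ n` and `c_0 = c_{n+1} = 0`. So it is affine there, with slope
`h^{-3/2} (c_{k+1} - c_k)`, and `∫ ((𝔍_n u)')² = h^{-2} ∑_k (c_{k+1} - c_k)²`.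
Since `𝔢_i ≥ 0` and `∫ 𝔢_i = h^{1/2}`, the defect `c_i - h^{1/2} u(i h)` is at most `h^{1/2}`
times `∫ |u'|` over the support of `𝔢_i`; it vanishes at `i = 0, n+1` because `u(0) = u(1) = 0`.
Writing `c_{k+1} - c_k` as two defects plus `h^{1/2} (u((k+1) h) - u(k h))` and applying
Cauchy–Schwarz on each cell bounds every term by the energies `∫ u'²` of at most two
neighbouring cells, which gives the constant `27`.
-/

open MeasureTheory

/-- The hat function `𝔢_{i,n}`: continuous, piecewise linear, supported on
`[(i-1)h_n, (i+1)h_n]` with `h_n = 1/(n+1)`, affine on each of the two subintervals,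
and with peak value `𝔢_{i,n}(i h_n) = h_n^{-1/2} = √(n+1)`. -/
noncomputable def hatFn (n i : ℕ) : ℝ → ℝ := fun x =>
  Real.sqrt ((n : ℝ) + 1) * max 0 (1 - |((n : ℝ) + 1) * x - (i : ℝ)|)

/-- The piecewise-linear projection `𝔍_n u = ∑_{i=1}^n (∫₀¹ u 𝔢_{i,n}) 𝔢_{i,n}`. -/
noncomputable def Jn (n : ℕ) (u : ℝ → ℝ) : ℝ → ℝ := fun x =>
  ∑ i ∈ Finset.Icc 1 n, (∫ y in (0:ℝ)..1, u y * hatFn n i y) * hatFn n i x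

open Set

theorem sq_intervalIntegral_le {f : ℝ → ℝ} {a b : ℝ} (hab : a ≤ b)
    (hf : IntervalIntegrable f volume a b)
    (hf2 : IntervalIntegrable (fun t => f t ^ 2) volume a b) :
    (∫ t in a..b, f t) ^ 2 ≤ (b - a) * ∫ t in a..b, f t ^ 2 := by
  rcases hab.eq_or_lt with rfl | hlt
  · simp
  have hba : 0 < b - a := sub_pos.2 hlt
  have hjensen : (⨍ t in a..b, f t) ^ 2 ≤ ⨍ t in a..b, f t ^ 2 :=
    (even_two.convexOn_pow (𝕜 := ℝ)).map_set_average_le (continuous_pow 2).continuousOn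
      isClosed_univ (by simp [hba.ne']) (by simp) (by simp)
      (by simpa [uIoc_of_le hab] using hf.1)
      (by simpa [uIoc_of_le hab, Function.comp_def] using hf2.1)
  simp only [interval_average_eq, smul_eq_mul] at hjensen
  calc (∫ t in a..b, f t) ^ 2 = (b - a) ^ 2 * ((b - a)⁻¹ * ∫ t in a..b, f t) ^ 2 := by
        field_simp
    _ ≤ (b - a) ^ 2 * ((b - a)⁻¹ * ∫ t in a..b, f t ^ 2) := by gcongr
    _ = (b - a) * ∫ t in a..b, f t ^ 2 := by field_simp

theorem abs_intervalIntegral_mul_sub_le {u φ : ℝ → ℝ} {a b c K : ℝ} (hab : a ≤ b)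
    (huφ : IntervalIntegrable (fun y => u y * φ y) volume a b)
    (hφ : IntervalIntegrable φ volume a b) (hφ0 : ∀ y ∈ Icc a b, 0 ≤ φ y)
    (hK : ∀ y ∈ Icc a b, |u y - c| ≤ K) :
    |(∫ y in a..b, u y * φ y) - c * ∫ y in a..b, φ y| ≤ K * ∫ y in a..b, φ y := by
  have hsub : IntervalIntegrable (fun y => (u y - c) * φ y) volume a b := by
    simpa only [sub_mul] using huφ.sub (hφ.const_mul c)
  calc |(∫ y in a..b, u y * φ y) - c * ∫ y in a..b, φ y|
      = |∫ y in a..b, (u y - c) * φ y| := by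
        rw [← intervalIntegral.integral_const_mul, ← intervalIntegral.integral_sub huφ
          (hφ.const_mul c)]
        simp only [sub_mul]
    _ ≤ ∫ y in a..b, |(u y - c) * φ y| := intervalIntegral.abs_integral_le_integral_abs hab
    _ ≤ ∫ y in a..b, K * φ y := by
        refine intervalIntegral.integral_mono_on hab hsub.abs (hφ.const_mul K) fun y hy => ?_
        rw [abs_mul, abs_of_nonneg (hφ0 y hy)]
        exact mul_le_mul_of_nonneg_right (hK y hy) (hφ0 y hy)
    _ = K * ∫ y in a..b, φ y := intervalIntegral.integral_const_mul K φ

theorem intervalIntegral_eq_of_eqOn_Ioo {f : ℝ → ℝ} {a b c : ℝ} (hab : a ≤ b)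
    (h : EqOn f (fun _ => c) (Ioo a b)) : ∫ x in a..b, f x = (b - a) * c := by
  rw [intervalIntegral.integral_of_le hab, integral_Ioc_eq_integral_Ioo,
    setIntegral_congr_fun measurableSet_Ioo h, setIntegral_const]
  simp [hab]

theorem intervalIntegrable_of_eqOn_Ioo {f : ℝ → ℝ} {a b c : ℝ} (hab : a ≤ b)
    (h : EqOn f (fun _ => c) (Ioo a b)) : IntervalIntegrable f volume a b := by
  rw [intervalIntegrable_iff_integrableOn_Ioo_of_le hab]
  exact (integrableOn_congr_fun h measurableSet_Ioo).2 (integrableOn_const measure_Ioo_lt_top.ne)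

theorem integral_const_add_mul (α β a b : ℝ) :
    ∫ x in a..b, (α + β * x) = α * (b - a) + β * ((b ^ 2 - a ^ 2) / 2) := by
  rw [intervalIntegral.integral_add intervalIntegrable_const
    (intervalIntegral.intervalIntegrable_id.const_mul β), intervalIntegral.integral_const_mul,
    integral_id, intervalIntegral.integral_const, smul_eq_mul, mul_comm]

theorem sum_range_add_succ_le {x : ℕ → ℝ} (hx : ∀ k, 0 ≤ x k) (m : ℕ) :
    ∑ k ∈ Finset.range m, (x k + x (k + 1)) ≤ 2 * ∑ k ∈ Finset.range (m + 1), x k := by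
  rw [Finset.sum_add_distrib, two_mul]
  refine add_le_add ?_ ?_
  · exact Finset.sum_le_sum_of_subset_of_nonneg (by simp) fun k _ _ => hx k
  · rw [Finset.sum_range_succ' x m]
    exact le_add_of_nonneg_right (hx 0)

theorem add_add_sq_le (x y z : ℝ) : (x + y + z) ^ 2 ≤ 3 * (x ^ 2 + y ^ 2 + z ^ 2) := by
  nlinarith [sq_nonneg (x - y), sq_nonneg (y - z), sq_nonneg (x - z)]

theorem sq_mul_sqrt_div_self (N : ℝ) (hN : 0 < N) : N ^ 2 * (√N / N) ^ 2 = N := by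
  rw [div_pow, Real.sq_sqrt hN.le]
  field_simp

section DerivWithinIcc

variable {u : ℝ → ℝ} {c d : ℝ}

theorem ContDiffOn.hasDerivAt_derivWithin_Icc (hu : ContDiffOn ℝ 1 u (Icc c d)) {x : ℝ}
    (hx : x ∈ Ioo c d) : HasDerivAt u (derivWithin u (Icc c d) x) x :=
  (hu.differentiableOn one_ne_zero x (Ioo_subset_Icc_self hx)).hasDerivWithinAt.hasDerivAt
    (Icc_mem_nhds hx.1 hx.2)

theorem ContDiffOn.intervalIntegrable_derivWithin_Icc (hu : ContDiffOn ℝ 1 u (Icc c d))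
    (hcd : c < d) {a b : ℝ} (ha : a ∈ Icc c d) (hb : b ∈ Icc c d) :
    IntervalIntegrable (derivWithin u (Icc c d)) volume a b :=
  ((hu.continuousOn_derivWithin (uniqueDiffOn_Icc hcd) le_rfl).mono
    (uIcc_subset_Icc ha hb)).intervalIntegrable

theorem ContDiffOn.sub_eq_intervalIntegral_derivWithin (hu : ContDiffOn ℝ 1 u (Icc c d))
    (hcd : c < d) {a b : ℝ} (hca : c ≤ a) (hab : a ≤ b) (hbd : b ≤ d) :
    u b - u a = ∫ t in a..b, derivWithin u (Icc c d) t :=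
  (intervalIntegral.integral_eq_sub_of_hasDerivAt_of_le hab
    (hu.continuousOn.mono (Icc_subset_Icc hca hbd))
    (fun _ hx => hu.hasDerivAt_derivWithin_Icc ⟨hca.trans_lt hx.1, hx.2.trans_le hbd⟩)
    (hu.intervalIntegrable_derivWithin_Icc hcd ⟨hca, hab.trans hbd⟩
      ⟨hca.trans hab, hbd⟩)).symm

theorem ContDiffOn.abs_sub_le_intervalIntegral_abs_derivWithin (hu : ContDiffOn ℝ 1 u (Icc c d))
    (hcd : c < d) {a b p q : ℝ} (hca : c ≤ a) (hbd : b ≤ d) (hp : p ∈ Icc a b)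
    (hq : q ∈ Icc a b) : |u q - u p| ≤ ∫ t in a..b, |derivWithin u (Icc c d) t| := by
  wlog hpq : p ≤ q generalizing p q
  · rw [abs_sub_comm]
    exact this hq hp (le_of_not_ge hpq)
  rw [hu.sub_eq_intervalIntegral_derivWithin hcd (hca.trans hp.1) hpq (hq.2.trans hbd)]
  refine (intervalIntegral.abs_integral_le_integral_abs hpq).trans ?_
  refine intervalIntegral.integral_mono_interval hp.1 hpq hq.2
    (Filter.Eventually.of_forall fun _ => abs_nonneg _) ?_
  exact (hu.intervalIntegrable_derivWithin_Icc hcd ⟨hca, (hp.1.trans hp.2).trans hbd⟩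
    ⟨hca.trans (hp.1.trans hp.2), hbd⟩).abs

end DerivWithinIcc

noncomputable def gridPt (n j : ℕ) : ℝ := j / ((n : ℝ) + 1)

section Grid

variable {n j k : ℕ} {x : ℝ}

theorem gridPt_zero (n : ℕ) : gridPt n 0 = 0 := by simp [gridPt]

theorem gridPt_succ_self (n : ℕ) : gridPt n (n + 1) = 1 := by
  rw [gridPt, Nat.cast_succ, div_self (by positivity)]

theorem gridPt_nonneg (n j : ℕ) : 0 ≤ gridPt n j := by unfold gridPt; positivity

theorem gridPt_mono (n : ℕ) : Monotone (gridPt n) := fun _ _ h => by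
  unfold gridPt; gcongr

theorem gridPt_le_succ (n j : ℕ) : gridPt n j ≤ gridPt n (j + 1) :=
  gridPt_mono n (Nat.le_add_right j 1)

theorem gridPt_le_one (h : j ≤ n + 1) : gridPt n j ≤ 1 :=
  gridPt_succ_self n ▸ gridPt_mono n h

theorem gridPt_mem_Icc (h : j ≤ n + 1) : gridPt n j ∈ Icc 0 1 :=
  ⟨gridPt_nonneg n j, gridPt_le_one h⟩

theorem gridPt_succ_sub (n j : ℕ) : gridPt n (j + 1) - gridPt n j = ((n : ℝ) + 1)⁻¹ := by
  simp only [gridPt, Nat.cast_succ]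
  field_simp
  ring

theorem mem_Icc_gridPt_iff :
    x ∈ Icc (gridPt n j) (gridPt n k) ↔
      (j : ℝ) ≤ ((n : ℝ) + 1) * x ∧ ((n : ℝ) + 1) * x ≤ k := by
  simp only [mem_Icc, gridPt, div_le_iff₀' (by positivity : (0 : ℝ) < n + 1),
    le_div_iff₀' (by positivity : (0 : ℝ) < n + 1)]

theorem mem_Ioo_gridPt_iff :
    x ∈ Ioo (gridPt n j) (gridPt n k) ↔
      (j : ℝ) < ((n : ℝ) + 1) * x ∧ ((n : ℝ) + 1) * x < k := by
  simp only [mem_Ioo, gridPt, div_lt_iff₀' (by positivity : (0 : ℝ) < n + 1),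
    lt_div_iff₀' (by positivity : (0 : ℝ) < n + 1)]

end Grid

theorem cell_subset_Icc {n j : ℕ} (hj : j ≤ n) :
    Icc (gridPt n j) (gridPt n (j + 1)) ⊆ Icc 0 1 :=
  Icc_subset_Icc (gridPt_nonneg n j) (gridPt_le_one (by omega))

theorem integral_eq_sum_integral_cells (n : ℕ) {f : ℝ → ℝ}
    (hf : ∀ k < n + 1, IntervalIntegrable f volume (gridPt n k) (gridPt n (k + 1))) :
    ∫ x in (0 : ℝ)..1, f x =
      ∑ k ∈ Finset.range (n + 1), ∫ x in gridPt n k..gridPt n (k + 1), f x := by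
  rw [intervalIntegral.sum_integral_adjacent_intervals hf, gridPt_zero, gridPt_succ_self]

noncomputable def cellEnergy (n : ℕ) (g : ℝ → ℝ) (j : ℕ) : ℝ :=
  ∫ t in gridPt n j..gridPt n (j + 1), g t ^ 2

theorem cellEnergy_nonneg (n : ℕ) (g : ℝ → ℝ) (j : ℕ) : 0 ≤ cellEnergy n g j :=
  intervalIntegral.integral_nonneg (gridPt_le_succ n j) fun _ _ => sq_nonneg _

theorem mul_sq_integral_abs_le_cellEnergy {n j : ℕ} {g : ℝ → ℝ}
    (hg : ContinuousOn g (Icc (gridPt n j) (gridPt n (j + 1)))) :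
    ((n : ℝ) + 1) * (∫ t in gridPt n j..gridPt n (j + 1), |g t|) ^ 2 ≤ cellEnergy n g j := by
  have hle := gridPt_le_succ n j
  have hcs := sq_intervalIntegral_le hle (hg.abs.intervalIntegrable_of_Icc hle)
    ((hg.abs.pow 2).intervalIntegrable_of_Icc hle)
  simp only [sq_abs, gridPt_succ_sub] at hcs
  exact (le_inv_mul_iff₀ (by positivity)).1 hcs

section Hat

variable {n i k : ℕ} {x : ℝ}

theorem hatFn_nonneg (n i : ℕ) (x : ℝ) : 0 ≤ hatFn n i x := by unfold hatFn; positivity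

theorem continuous_hatFn (n i : ℕ) : Continuous (hatFn n i) := by unfold hatFn; fun_prop

theorem hatFn_eq_zero (hx : 1 ≤ |((n : ℝ) + 1) * x - i|) : hatFn n i x = 0 := by
  rw [hatFn, max_eq_left (by linarith), mul_zero]

theorem hatFn_of_mem_cell (hx : x ∈ Icc (gridPt n k) (gridPt n (k + 1))) :
    hatFn n k x = √((n : ℝ) + 1) * (k + 1 - ((n : ℝ) + 1) * x) := by
  rw [mem_Icc_gridPt_iff, Nat.cast_succ] at hx
  rw [hatFn, abs_of_nonneg (by linarith), max_eq_right (by linarith)]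
  ring

theorem hatFn_succ_of_mem_cell (hx : x ∈ Icc (gridPt n k) (gridPt n (k + 1))) :
    hatFn n (k + 1) x = √((n : ℝ) + 1) * (((n : ℝ) + 1) * x - k) := by
  rw [mem_Icc_gridPt_iff, Nat.cast_succ] at hx
  rw [hatFn, Nat.cast_succ, abs_of_nonpos (by linarith), max_eq_right (by linarith)]
  ring

theorem hatFn_of_mem_cell_of_ne (hx : x ∈ Icc (gridPt n k) (gridPt n (k + 1))) (hik : i ≠ k)
    (hik' : i ≠ k + 1) : hatFn n i x = 0 := by
  rw [mem_Icc_gridPt_iff, Nat.cast_succ] at hx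
  apply hatFn_eq_zero
  rcases hik.lt_or_gt with h | h
  · have : (i : ℝ) + 1 ≤ k := by exact_mod_cast h
    rw [abs_of_nonneg (by linarith)]
    linarith
  · have : (k : ℝ) + 2 ≤ i := by exact_mod_cast (by omega : k + 2 ≤ i)
    rw [abs_of_nonpos (by linarith)]
    linarith

theorem support_hatFn_succ_subset (n k : ℕ) :
    Function.support (hatFn n (k + 1)) ⊆ Ioo (gridPt n k) (gridPt n (k + 2)) := by
  intro x hx
  rw [mem_Ioo_gridPt_iff]
  by_contra h
  refine hx (hatFn_eq_zero ?_)
  push_cast at h ⊢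
  rcases le_or_gt ((n + 1 : ℝ) * x) k with h' | h'
  · rw [abs_of_nonpos (by linarith)]; linarith
  · have : ((n : ℝ) + 1) * x ≥ k + 2 := by by_contra h''; exact h ⟨h', by linarith⟩
    rw [abs_of_nonneg (by linarith)]; linarith

theorem integral_hatFn_cell (n k : ℕ) :
    ∫ x in gridPt n k..gridPt n (k + 1), hatFn n k x =
      √((n : ℝ) + 1) / (2 * ((n : ℝ) + 1)) := by
  rw [intervalIntegral.integral_congr (g := fun x => √((n : ℝ) + 1) * (k + 1) +
    -(√((n : ℝ) + 1) * ((n : ℝ) + 1)) * x) fun x hx => by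
      rw [hatFn_of_mem_cell (uIcc_of_le (gridPt_le_succ n k) ▸ hx)]; ring]
  rw [integral_const_add_mul, gridPt, gridPt, Nat.cast_succ]
  field_simp
  ring

theorem integral_hatFn_succ_cell (n k : ℕ) :
    ∫ x in gridPt n k..gridPt n (k + 1), hatFn n (k + 1) x =
      √((n : ℝ) + 1) / (2 * ((n : ℝ) + 1)) := by
  rw [intervalIntegral.integral_congr (g := fun x => -(√((n : ℝ) + 1) * k) +
    √((n : ℝ) + 1) * ((n : ℝ) + 1) * x) fun x hx => by
      rw [hatFn_succ_of_mem_cell (uIcc_of_le (gridPt_le_succ n k) ▸ hx)]; ring]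
  rw [integral_const_add_mul, gridPt, gridPt, Nat.cast_succ]
  field_simp
  ring

theorem integral_hatFn_succ (n k : ℕ) :
    ∫ x in gridPt n k..gridPt n (k + 2), hatFn n (k + 1) x =
      √((n : ℝ) + 1) / ((n : ℝ) + 1) := by
  rw [← intervalIntegral.integral_add_adjacent_intervals
    ((continuous_hatFn n _).intervalIntegrable _ _) ((continuous_hatFn n _).intervalIntegrable _ _),
    integral_hatFn_succ_cell, integral_hatFn_cell]
  field_simp
  ring

end Hat

noncomputable def hatCoeff (n : ℕ) (u : ℝ → ℝ) (i : ℕ) : ℝ :=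
  if i ∈ Finset.Icc 1 n then ∫ y in (0 : ℝ)..1, u y * hatFn n i y else 0

section Interpolant

variable {n k : ℕ} {u : ℝ → ℝ} {x : ℝ}

theorem Jn_of_mem_cell (hx : x ∈ Icc (gridPt n k) (gridPt n (k + 1))) :
    Jn n u x = hatCoeff n u k * hatFn n k x + hatCoeff n u (k + 1) * hatFn n (k + 1) x := by
  have hJ : Jn n u x = ∑ i ∈ Finset.Icc 1 n, hatCoeff n u i * hatFn n i x :=
    Finset.sum_congr rfl fun i hi => by rw [hatCoeff, if_pos hi]
  rw [hJ]
  exact Finset.sum_eq_add k (k + 1) k.succ_ne_self.symm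
    (fun i _ hi => by rw [hatFn_of_mem_cell_of_ne hx hi.1 hi.2, mul_zero])
    (fun hk => by rw [hatCoeff, if_neg hk, zero_mul])
    (fun hk => by rw [hatCoeff, if_neg hk, zero_mul])

theorem hasDerivAt_Jn_of_mem_cell (hx : x ∈ Ioo (gridPt n k) (gridPt n (k + 1))) :
    HasDerivAt (Jn n u)
      (√((n : ℝ) + 1) * ((n : ℝ) + 1) * (hatCoeff n u (k + 1) - hatCoeff n u k)) x := by
  set N : ℝ := (n : ℝ) + 1
  have hJ : (fun y => √N * (hatCoeff n u k * (k + 1) - hatCoeff n u (k + 1) * k) +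
      √N * N * (hatCoeff n u (k + 1) - hatCoeff n u k) * y) =ᶠ[nhds x] Jn n u :=
    Filter.eventuallyEq_of_mem (isOpen_Ioo.mem_nhds hx) fun y hy => by
      have hy' := Ioo_subset_Icc_self hy
      rw [Jn_of_mem_cell hy', hatFn_of_mem_cell hy', hatFn_succ_of_mem_cell hy']
      ring
  simpa using (((hasDerivAt_id x).const_mul _).const_add _).congr_of_eventuallyEq hJ.symm

theorem hatCoeff_succ (hk : k < n) :
    hatCoeff n u (k + 1) = ∫ y in gridPt n k..gridPt n (k + 2), u y * hatFn n (k + 1) y := by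
  have hsupp := (Function.support_mul_subset_right u (hatFn n (k + 1))).trans
    ((support_hatFn_succ_subset n k).trans Ioo_subset_Ioc_self)
  rw [hatCoeff, if_pos (by simp; omega), intervalIntegral.integral_eq_integral_of_support_subset
    hsupp, intervalIntegral.integral_eq_integral_of_support_subset (hsupp.trans
      (Ioc_subset_Ioc (gridPt_nonneg n k) (gridPt_le_one (by omega))))]

end Interpolant

theorem integral_sq_deriv_Jn (n : ℕ) (u : ℝ → ℝ) :
    ∫ x in (0 : ℝ)..1, deriv (Jn n u) x ^ 2 =
      ∑ k ∈ Finset.range (n + 1),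
        ((n : ℝ) + 1) ^ 2 * (hatCoeff n u (k + 1) - hatCoeff n u k) ^ 2 := by
  have hconst (k : ℕ) : EqOn (fun x => deriv (Jn n u) x ^ 2) (fun _ =>
      (√((n : ℝ) + 1) * ((n : ℝ) + 1) * (hatCoeff n u (k + 1) - hatCoeff n u k)) ^ 2)
      (Ioo (gridPt n k) (gridPt n (k + 1))) := fun x hx => by
    simp only [(hasDerivAt_Jn_of_mem_cell hx).deriv]
  rw [integral_eq_sum_integral_cells n fun k _ =>
    intervalIntegrable_of_eqOn_Ioo (gridPt_le_succ n k) (hconst k)]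
  refine Finset.sum_congr rfl fun k _ => ?_
  rw [intervalIntegral_eq_of_eqOn_Ioo (gridPt_le_succ n k) (hconst k), gridPt_succ_sub,
    mul_pow, mul_pow, Real.sq_sqrt (by positivity)]
  field_simp

noncomputable def nodalDefect (n : ℕ) (u : ℝ → ℝ) (i : ℕ) : ℝ :=
  hatCoeff n u i - u (gridPt n i) * (√((n : ℝ) + 1) / ((n : ℝ) + 1))

theorem nodalDefect_zero {n : ℕ} {u : ℝ → ℝ} (h0 : u 0 = 0) : nodalDefect n u 0 = 0 := by
  simp [nodalDefect, hatCoeff, gridPt_zero, h0]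

theorem nodalDefect_succ_self {n : ℕ} {u : ℝ → ℝ} (h1 : u 1 = 0) :
    nodalDefect n u (n + 1) = 0 := by
  simp [nodalDefect, hatCoeff, gridPt_succ_self, h1]

section Estimates

variable {n k : ℕ} {u : ℝ → ℝ} (hu : ContDiffOn ℝ 1 u (Icc 0 1))
include hu

theorem abs_hatCoeff_succ_sub_le (hk : k < n) :
    |hatCoeff n u (k + 1) - u (gridPt n (k + 1)) * (√((n : ℝ) + 1) / ((n : ℝ) + 1))| ≤
      (∫ t in gridPt n k..gridPt n (k + 2), |derivWithin u (Icc 0 1) t|) *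
        (√((n : ℝ) + 1) / ((n : ℝ) + 1)) := by
  have hle : gridPt n k ≤ gridPt n (k + 2) := gridPt_mono n (by omega)
  have hwin : Icc (gridPt n k) (gridPt n (k + 2)) ⊆ Icc 0 1 :=
    Icc_subset_Icc (gridPt_nonneg n k) (gridPt_le_one (by omega))
  have huφ := (hu.continuousOn.mono hwin).mul (continuous_hatFn n (k + 1)).continuousOn
  rw [hatCoeff_succ hk, ← integral_hatFn_succ]
  refine abs_intervalIntegral_mul_sub_le hle (huφ.intervalIntegrable_of_Icc hle)
    ((continuous_hatFn n _).intervalIntegrable _ _) (fun y _ => hatFn_nonneg n _ y) fun y hy => ?_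
  exact hu.abs_sub_le_intervalIntegral_abs_derivWithin zero_lt_one (gridPt_nonneg n k)
    (gridPt_le_one (by omega)) ⟨gridPt_le_succ n k, gridPt_mono n (by omega)⟩ hy

theorem mul_sq_integral_abs_derivWithin_le (hk : k ≤ n) :
    ((n : ℝ) + 1) * (∫ t in gridPt n k..gridPt n (k + 1), |derivWithin u (Icc 0 1) t|) ^ 2 ≤
      cellEnergy n (derivWithin u (Icc 0 1)) k :=
  mul_sq_integral_abs_le_cellEnergy ((hu.continuousOn_derivWithin (uniqueDiffOn_Icc zero_lt_one)
    le_rfl).mono (cell_subset_Icc hk))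

theorem mul_sq_sub_gridPt_le (hk : k ≤ n) :
    ((n : ℝ) + 1) * (u (gridPt n (k + 1)) - u (gridPt n k)) ^ 2 ≤
      cellEnergy n (derivWithin u (Icc 0 1)) k := by
  have hosc := hu.abs_sub_le_intervalIntegral_abs_derivWithin zero_lt_one (gridPt_nonneg n k)
    (gridPt_le_one (by omega)) (left_mem_Icc.2 (gridPt_le_succ n k))
    (right_mem_Icc.2 (gridPt_le_succ n k))
  refine le_trans ?_ (mul_sq_integral_abs_derivWithin_le hu hk)
  rw [← sq_abs (u _ - u _)]
  gcongr

theorem sq_nodalDefect_succ_le (hk : k < n) :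
    ((n : ℝ) + 1) ^ 2 * nodalDefect n u (k + 1) ^ 2 ≤
      2 * (cellEnergy n (derivWithin u (Icc 0 1)) k +
        cellEnergy n (derivWithin u (Icc 0 1)) (k + 1)) := by
  set N : ℝ := (n : ℝ) + 1
  set D : ℕ → ℝ := fun j => ∫ t in gridPt n j..gridPt n (j + 1), |derivWithin u (Icc 0 1) t|
  have hint (j : ℕ) (hj : j ≤ n) : IntervalIntegrable (fun t => |derivWithin u (Icc 0 1) t|)
      volume (gridPt n j) (gridPt n (j + 1)) :=
    (hu.intervalIntegrable_derivWithin_Icc zero_lt_one (gridPt_mem_Icc (by omega))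
      (gridPt_mem_Icc (by omega))).abs
  have hwin :
      ∫ t in gridPt n k..gridPt n (k + 2), |derivWithin u (Icc 0 1) t| = D k + D (k + 1) :=
    (intervalIntegral.integral_add_adjacent_intervals (hint k hk.le) (hint (k + 1) hk)).symm
  have hdef := abs_hatCoeff_succ_sub_le hu hk
  rw [hwin] at hdef
  calc N ^ 2 * nodalDefect n u (k + 1) ^ 2
      ≤ N ^ 2 * ((D k + D (k + 1)) * (√N / N)) ^ 2 := by
        have hsq := pow_le_pow_left₀ (abs_nonneg _) hdef 2
        rw [sq_abs] at hsq
        exact mul_le_mul_of_nonneg_left hsq (by positivity)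
    _ = N * (D k + D (k + 1)) ^ 2 := by
        rw [mul_pow, mul_left_comm, sq_mul_sqrt_div_self N (by positivity), mul_comm]
    _ ≤ N * (2 * (D k ^ 2 + D (k + 1) ^ 2)) := by gcongr; exact add_sq_le
    _ = 2 * (N * D k ^ 2 + N * D (k + 1) ^ 2) := by ring
    _ ≤ _ := by
        gcongr
        · exact mul_sq_integral_abs_derivWithin_le hu hk.le
        · exact mul_sq_integral_abs_derivWithin_le hu hk

theorem sq_hatCoeff_succ_sub_le (hk : k ≤ n) :
    ((n : ℝ) + 1) ^ 2 * (hatCoeff n u (k + 1) - hatCoeff n u k) ^ 2 ≤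
      3 * (((n : ℝ) + 1) ^ 2 * nodalDefect n u (k + 1) ^ 2 +
        ((n : ℝ) + 1) ^ 2 * nodalDefect n u k ^ 2 +
          cellEnergy n (derivWithin u (Icc 0 1)) k) := by
  set N : ℝ := (n : ℝ) + 1
  have hsplit : hatCoeff n u (k + 1) - hatCoeff n u k = nodalDefect n u (k + 1) +
      -nodalDefect n u k + (u (gridPt n (k + 1)) - u (gridPt n k)) * (√N / N) := by
    simp only [nodalDefect]; ring
  calc N ^ 2 * (hatCoeff n u (k + 1) - hatCoeff n u k) ^ 2
      ≤ 3 * (N ^ 2 * nodalDefect n u (k + 1) ^ 2 + N ^ 2 * nodalDefect n u k ^ 2 +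
          N ^ 2 * (√N / N) ^ 2 * (u (gridPt n (k + 1)) - u (gridPt n k)) ^ 2) := by
        rw [hsplit]
        linear_combination N ^ 2 * add_add_sq_le (nodalDefect n u (k + 1)) (-nodalDefect n u k)
          ((u (gridPt n (k + 1)) - u (gridPt n k)) * (√N / N))
    _ ≤ _ := by
        rw [sq_mul_sqrt_div_self N (by positivity)]
        gcongr
        exact mul_sq_sub_gridPt_le hu hk

theorem sum_sq_hatCoeff_sub_le (h0 : u 0 = 0) (h1 : u 1 = 0) :
    ∑ k ∈ Finset.range (n + 1),
        ((n : ℝ) + 1) ^ 2 * (hatCoeff n u (k + 1) - hatCoeff n u k) ^ 2 ≤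
      27 * ∑ k ∈ Finset.range (n + 1), cellEnergy n (derivWithin u (Icc 0 1)) k := by
  set E := cellEnergy n (derivWithin u (Icc 0 1))
  set a : ℕ → ℝ := fun i => ((n : ℝ) + 1) ^ 2 * nodalDefect n u i ^ 2
  have ha : ∑ k ∈ Finset.range (n + 2), a k ≤ 4 * ∑ k ∈ Finset.range (n + 1), E k := by
    rw [Finset.sum_range_succ, Finset.sum_range_succ']
    simp only [a, nodalDefect_zero h0, nodalDefect_succ_self h1]
    calc _ ≤ ∑ k ∈ Finset.range n, 2 * (E k + E (k + 1)) := by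
          simpa using Finset.sum_le_sum fun k hk =>
            sq_nodalDefect_succ_le hu (Finset.mem_range.1 hk)
      _ ≤ 4 * ∑ k ∈ Finset.range (n + 1), E k := by
          rw [← Finset.mul_sum, show (4 : ℝ) = 2 * 2 by norm_num, mul_assoc]
          gcongr
          exact sum_range_add_succ_le (cellEnergy_nonneg n _) n
  calc _ ≤ ∑ k ∈ Finset.range (n + 1), 3 * (a (k + 1) + a k + E k) :=
        Finset.sum_le_sum fun k hk =>
          sq_hatCoeff_succ_sub_le hu (Nat.lt_succ_iff.1 (Finset.mem_range.1 hk))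
    _ = 3 * ∑ k ∈ Finset.range (n + 1), (a k + a (k + 1)) +
          3 * ∑ k ∈ Finset.range (n + 1), E k := by
        simp only [Finset.mul_sum, ← Finset.sum_add_distrib]
        exact Finset.sum_congr rfl fun k _ => by ring
    _ ≤ 3 * (2 * (4 * ∑ k ∈ Finset.range (n + 1), E k)) +
          3 * ∑ k ∈ Finset.range (n + 1), E k := by
        gcongr
        exact (sum_range_add_succ_le (fun i => by positivity) (n + 1)).trans (by gcongr)
    _ = 27 * ∑ k ∈ Finset.range (n + 1), E k := by ring

end Estimates

/-- There exists `C > 0` such that for every `n ≥ 1` and every `C¹` function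
`u : [0,1] → ℝ` with `u(0) = u(1) = 0`, the a.e. derivative of the piecewise-linear
function `𝔍_n u` satisfies `∫₀¹ ((𝔍_n u)'(x))² dx ≤ C ∫₀¹ (u'(x))² dx`. -/
theorem stmt5 :
    ∃ C : ℝ, 0 < C ∧ ∀ n : ℕ, 1 ≤ n → ∀ u : ℝ → ℝ,
      ContDiffOn ℝ 1 u (Set.Icc 0 1) → u 0 = 0 → u 1 = 0 →
      (∫ x in (0:ℝ)..1, (deriv (Jn n u) x) ^ 2) ≤
        C * ∫ x in (0:ℝ)..1, (derivWithin u (Set.Icc 0 1) x) ^ 2 := by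
  refine ⟨27, by norm_num, fun n _ u hu h0 h1 => ?_⟩
  have hg := hu.continuousOn_derivWithin (uniqueDiffOn_Icc zero_lt_one) le_rfl
  rw [integral_sq_deriv_Jn, integral_eq_sum_integral_cells n
    (f := fun x => derivWithin u (Icc 0 1) x ^ 2) fun k hk =>
    ((hg.mono (cell_subset_Icc (Nat.lt_succ_iff.1 hk))).pow 2).intervalIntegrable_of_Icc
      (gridPt_le_succ n k)]
  exact sum_sq_hatCoeff_sub_le hu h0 h1
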